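/- (Tightened sum-rate bound for Class III; proved in Section 5.4.) Let U, V1, V2, W, Y1, Y2 be random variables with values in finite sets. Define I1 = I(V1;Y1|U) − I(V1;Y2|U) + H(W|U,V1); I2 = I(V2;Y2|U) − I(V2;Y1|U) + H(W|U,V2); I1* = I(V1;Y1|U,V2) − I(V1;Y2|U,V2) + H(W|U,V1,V2); and I2* = I(V2;Y2|U,V1) − I(V2;Y1|U,V1) + H(W|U,V1,V2). Then min[ I1 + I2*, I2 + I1* ] ≤ I1 + I2; consequently, for rate pairs satisfying R1 ≤ min[I1, I1*] and R2 ≤ min[I2, I2*], the sum-rate bound R1 + R2 ≤ min[ I1 + I2*, I2 + I1* ] holds and is at least as tight as the bound R1 + R2 ≤ I1 + I2. -/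

import Mathlib

open scoped Classical BigOperators
open Real

noncomputable section

/-- `p` is a probability mass function on a finite type. -/
def IsPMF {α : Type*} [Fintype α] (p : α → ℝ) : Prop :=
  (∀ a, 0 ≤ p a) ∧ ∑ a, p a = 1

/-- Base-2 Shannon entropy of a pmf on a finite type. -/
def entPMF {α : Type*} [Fintype α] (p : α → ℝ) : ℝ :=
  ∑ a, -(p a * Real.logb 2 (p a))

/-- Distribution (pushforward pmf) of a random variable `X` under the pmf `p`. -/
def distRV {Ω α : Type*} [Fintype Ω] (p : Ω → ℝ) (X : Ω → α) : α → ℝ :=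
  fun a => ∑ ω, if X ω = a then p ω else 0

/-- Shannon entropy `H(X)` of a random variable (base 2). -/
def entRV {Ω α : Type*} [Fintype Ω] [Fintype α] (p : Ω → ℝ) (X : Ω → α) : ℝ :=
  entPMF (distRV p X)

/-- Conditional entropy `H(X|Y)` (base 2). -/
def condEnt {Ω α β : Type*} [Fintype Ω] [Fintype α] [Fintype β]
    (p : Ω → ℝ) (X : Ω → α) (Y : Ω → β) : ℝ :=
  entRV p (fun ω => (X ω, Y ω)) - entRV p Y

/-- Mutual information `I(X;Y)` (base 2). -/
def mutInfo {Ω α β : Type*} [Fintype Ω] [Fintype α] [Fintype β]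
    (p : Ω → ℝ) (X : Ω → α) (Y : Ω → β) : ℝ :=
  entRV p X + entRV p Y - entRV p (fun ω => (X ω, Y ω))

/-- Conditional mutual information `I(X;Y|Z)` (base 2). -/
def condMutInfo {Ω α β γ : Type*} [Fintype Ω] [Fintype α] [Fintype β] [Fintype γ]
    (p : Ω → ℝ) (X : Ω → α) (Y : Ω → β) (Z : Ω → γ) : ℝ :=
  entRV p (fun ω => (X ω, Z ω)) + entRV p (fun ω => (Y ω, Z ω))
    - entRV p (fun ω => (X ω, Y ω, Z ω)) - entRV p Z

/-! By the chain rule, `I(V1;Y|U) + I(V2;Y|U,V1) = I(V2;Y|U) + I(V1;Y|U,V2)` for `Y = Y1, Y2`, so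
`(I1 + I2*) + (I2 + I1*) = 2 (I1 + I2) - (H(W|U,V1) - H(W|U,V1,V2)) - (H(W|U,V2) - H(W|U,V1,V2))`.
Conditioning reduces entropy, hence the smaller of the two sums is at most their mean, which is at
most `I1 + I2`. That conditioning reduces entropy is the nonnegativity of conditional mutual
information, i.e. Gibbs' inequality for the law of `(X, Y, Z)` against `P(x,z) P(y,z) / P(z)`. -/

section

variable {Ω : Type*} [Fintype Ω] {p : Ω → ℝ}

lemma distRV_nonneg {α : Type*} (hp : ∀ ω, 0 ≤ p ω) (X : Ω → α) (a : α) :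
    0 ≤ distRV p X a :=
  Finset.sum_nonneg fun ω _ => by split; exacts [hp ω, le_rfl]

lemma le_distRV_apply {α : Type*} (hp : ∀ ω, 0 ≤ p ω) (X : Ω → α) (ω : Ω) :
    p ω ≤ distRV p X (X ω) := by
  simpa [distRV] using Finset.single_le_sum (f := fun ω' => if X ω' = X ω then p ω' else 0)
    (fun ω' _ => by split; exacts [hp ω', le_rfl]) (Finset.mem_univ ω)

lemma distRV_le_distRV_comp {α β : Type*} (hp : ∀ ω, 0 ≤ p ω) (X : Ω → α) (f : α → β) (a : α) :
    distRV p X a ≤ distRV p (fun ω => f (X ω)) (f a) :=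
  Finset.sum_le_sum fun ω _ => by
    by_cases h : X ω = a
    · simp [h]
    · rw [if_neg h]; split; exacts [hp ω, le_rfl]

lemma sum_mul_comp_eq_sum_distRV_mul {α : Type*} [Fintype α] (X : Ω → α) (g : α → ℝ) :
    ∑ ω, p ω * g (X ω) = ∑ a, distRV p X a * g a := by
  simp only [distRV, Finset.sum_mul, ite_mul, zero_mul]
  rw [Finset.sum_comm]
  simp

lemma sum_distRV {α : Type*} [Fintype α] (X : Ω → α) : ∑ a, distRV p X a = ∑ ω, p ω := by
  simpa using (sum_mul_comp_eq_sum_distRV_mul (p := p) X fun _ => 1).symm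

lemma sum_distRV_pair_fst {α γ : Type*} [Fintype α] (X : Ω → α) (Z : Ω → γ) (c : γ) :
    ∑ a, distRV p (fun ω => (X ω, Z ω)) (a, c) = distRV p Z c := by
  simp only [distRV]
  rw [Finset.sum_comm]
  refine Finset.sum_congr rfl fun ω _ => ?_
  simp [Prod.ext_iff, ite_and]

lemma entRV_eq_neg_sum {α : Type*} [Fintype α] (X : Ω → α) :
    entRV p X = -∑ ω, p ω * logb 2 (distRV p X (X ω)) := by
  rw [sum_mul_comp_eq_sum_distRV_mul X fun a => logb 2 (distRV p X a)]
  simp [entRV, entPMF]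

lemma entRV_congr {α β : Type*} [Fintype α] [Fintype β] {X : Ω → α} {Y : Ω → β}
    (h : ∀ ω ω', X ω' = X ω ↔ Y ω' = Y ω) : entRV p X = entRV p Y := by
  have hdist : ∀ ω, distRV p X (X ω) = distRV p Y (Y ω) := fun ω =>
    Finset.sum_congr rfl fun ω' _ => by simp only [h ω ω']
  simp only [entRV_eq_neg_sum, hdist]

end

theorem sum_mul_logb_le_sum_mul_logb {ι : Type*} [Fintype ι] {q s : ι → ℝ}
    (hq : ∀ i, 0 ≤ q i) (hs : ∀ i, 0 ≤ s i) (hqs : ∀ i, 0 < q i → 0 < s i)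
    (hsum : ∑ i, s i ≤ ∑ i, q i) :
    ∑ i, q i * logb 2 (s i) ≤ ∑ i, q i * logb 2 (q i) := by
  have hlog2 : 0 < log 2 := log_pos one_lt_two
  have hpoint : ∀ i, q i * logb 2 (s i) - q i * logb 2 (q i) ≤ (s i - q i) / log 2 := by
    intro i
    rcases (hq i).eq_or_lt with hqi | hqi
    · rw [← hqi]
      simpa using div_nonneg (hs i) hlog2.le
    · have hsi := hqs i hqi
      rw [← mul_sub, ← logb_div hsi.ne' hqi.ne', logb, mul_div_assoc',
        div_le_div_iff_of_pos_right hlog2]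
      calc q i * log (s i / q i) ≤ q i * (s i / q i - 1) :=
            mul_le_mul_of_nonneg_left (log_le_sub_one_of_pos (div_pos hsi hqi)) (hq i)
        _ = s i - q i := by field_simp
  have htotal := Finset.sum_le_sum fun i (_ : i ∈ Finset.univ) => hpoint i
  rw [Finset.sum_sub_distrib, ← Finset.sum_div, Finset.sum_sub_distrib] at htotal
  have : (∑ i, s i - ∑ i, q i) / log 2 ≤ 0 := div_nonpos_of_nonpos_of_nonneg (by linarith) hlog2.le
  linarith

section

variable {Ω α β γ : Type*} [Fintype Ω] {p : Ω → ℝ}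

-- `P(x, z) P(y, z) / P(z)`: `x` and `y` are conditionally independent given `z`, with the laws of
-- `(X, Z)` and `(Y, Z)` as marginals; the junk division makes it `0` where `P(z) = 0`.
def condIndepPMF (p : Ω → ℝ) (X : Ω → α) (Y : Ω → β) (Z : Ω → γ) : α × β × γ → ℝ :=
  fun t => distRV p (fun ω => (X ω, Z ω)) (t.1, t.2.2)
    * distRV p (fun ω => (Y ω, Z ω)) (t.2.1, t.2.2) / distRV p Z t.2.2

variable (X : Ω → α) (Y : Ω → β) (Z : Ω → γ)

lemma condIndepPMF_nonneg (hp : ∀ ω, 0 ≤ p ω) (t : α × β × γ) : 0 ≤ condIndepPMF p X Y Z t :=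
  div_nonneg (mul_nonneg (distRV_nonneg hp _ _) (distRV_nonneg hp _ _)) (distRV_nonneg hp _ _)

lemma sum_condIndepPMF [Fintype α] [Fintype β] [Fintype γ] :
    ∑ t, condIndepPMF p X Y Z t = ∑ ω, p ω := by
  calc ∑ t, condIndepPMF p X Y Z t
      = ∑ a, ∑ b, ∑ c, condIndepPMF p X Y Z (a, b, c) := by simp only [Fintype.sum_prod_type]
    _ = ∑ a, ∑ c, ∑ b, condIndepPMF p X Y Z (a, b, c) :=
        Finset.sum_congr rfl fun a _ => Finset.sum_comm
    _ = ∑ c, ∑ a, ∑ b, condIndepPMF p X Y Z (a, b, c) := Finset.sum_comm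
    _ = ∑ c, (∑ a, distRV p (fun ω => (X ω, Z ω)) (a, c))
          * (∑ b, distRV p (fun ω => (Y ω, Z ω)) (b, c)) / distRV p Z c := by
        simp only [condIndepPMF, Finset.sum_mul, Finset.mul_sum, Finset.sum_div]
        exact Finset.sum_congr rfl fun _ _ => Finset.sum_comm
    _ = ∑ ω, p ω := by simp only [sum_distRV_pair_fst, mul_self_div_self, sum_distRV]

lemma condIndepPMF_pos (hp : ∀ ω, 0 ≤ p ω) {t : α × β × γ}
    (ht : 0 < distRV p (fun ω => (X ω, Y ω, Z ω)) t) : 0 < condIndepPMF p X Y Z t :=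
  div_pos (mul_pos (ht.trans_le (distRV_le_distRV_comp hp _ (fun t => (t.1, t.2.2)) t))
    (ht.trans_le (distRV_le_distRV_comp hp _ (fun t => (t.2.1, t.2.2)) t)))
    (ht.trans_le (distRV_le_distRV_comp hp _ (fun t => t.2.2) t))

lemma mul_logb_condIndepPMF (hp : ∀ ω, 0 ≤ p ω) (ω : Ω) :
    p ω * logb 2 (condIndepPMF p X Y Z (X ω, Y ω, Z ω))
      = p ω * (logb 2 (distRV p (fun ω => (X ω, Z ω)) (X ω, Z ω))
        + logb 2 (distRV p (fun ω => (Y ω, Z ω)) (Y ω, Z ω)) - logb 2 (distRV p Z (Z ω))) := by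
  rcases (hp ω).eq_or_lt with hω | hω
  · simp [← hω]
  · have hXZ := hω.trans_le (le_distRV_apply hp (fun ω => (X ω, Z ω)) ω)
    have hYZ := hω.trans_le (le_distRV_apply hp (fun ω => (Y ω, Z ω)) ω)
    have hZ := hω.trans_le (le_distRV_apply hp Z ω)
    rw [condIndepPMF, logb_div (mul_pos hXZ hYZ).ne' hZ.ne', logb_mul hXZ.ne' hYZ.ne']

theorem condMutInfo_nonneg [Fintype α] [Fintype β] [Fintype γ] (hp : ∀ ω, 0 ≤ p ω) :
    0 ≤ condMutInfo p X Y Z := by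
  set XYZ : Ω → α × β × γ := fun ω => (X ω, Y ω, Z ω)
  have hgibbs := sum_mul_logb_le_sum_mul_logb (distRV_nonneg hp XYZ)
    (condIndepPMF_nonneg X Y Z hp) (fun _ => condIndepPMF_pos X Y Z hp) (by rw [sum_condIndepPMF, sum_distRV])
  rw [← sum_mul_comp_eq_sum_distRV_mul XYZ, ← sum_mul_comp_eq_sum_distRV_mul XYZ] at hgibbs
  simp only [XYZ, mul_logb_condIndepPMF X Y Z hp, mul_add, mul_sub, Finset.sum_add_distrib,
    Finset.sum_sub_distrib] at hgibbs
  simp only [condMutInfo, entRV_eq_neg_sum]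
  linarith
end

section

variable {Ω α β γ δ : Type*} [Fintype Ω] [Fintype α] [Fintype β] [Fintype γ] [Fintype δ]
  {p : Ω → ℝ}

theorem condEnt_le_condEnt_comp (hp : ∀ ω, 0 ≤ p ω) (X : Ω → α) (Z : Ω → β) (f : β → γ) :
    condEnt p X Z ≤ condEnt p X (fun ω => f (Z ω)) := by
  have hI := condMutInfo_nonneg X Z (fun ω => f (Z ω)) hp
  have hZ : entRV p (fun ω => (Z ω, f (Z ω))) = entRV p Z :=
    entRV_congr fun _ _ => by simp only [Prod.mk.injEq]; exact ⟨And.left, fun h => ⟨h, h ▸ rfl⟩⟩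
  have hXZ : entRV p (fun ω => (X ω, Z ω, f (Z ω))) = entRV p (fun ω => (X ω, Z ω)) :=
    entRV_congr fun _ _ => by
      simp only [Prod.mk.injEq]; exact ⟨fun h => ⟨h.1, h.2.1⟩, fun h => ⟨h.1, h.2, h.2 ▸ rfl⟩⟩
  simp only [condMutInfo, condEnt] at hI ⊢
  linarith

lemma condMutInfo_congr_left {X : Ω → α} {X' : Ω → β} (Y : Ω → γ) (Z : Ω → δ)
    (h : ∀ ω ω', X ω' = X ω ↔ X' ω' = X' ω) : condMutInfo p X Y Z = condMutInfo p X' Y Z := by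
  simp only [condMutInfo]
  rw [entRV_congr (X := fun ω => (X ω, Z ω)) (Y := fun ω => (X' ω, Z ω))
      fun _ _ => by simp only [Prod.mk.injEq, h],
    entRV_congr (X := fun ω => (X ω, Y ω, Z ω)) (Y := fun ω => (X' ω, Y ω, Z ω))
      fun _ _ => by simp only [Prod.mk.injEq, h]]

theorem condMutInfo_pair_eq_add {ε : Type*} [Fintype ε]
    (A : Ω → α) (B : Ω → β) (Y : Ω → γ) (U : Ω → ε) :
    condMutInfo p (fun ω => (A ω, B ω)) Y U
      = condMutInfo p A Y U + condMutInfo p B Y (fun ω => (U ω, A ω)) := by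
  have h1 : entRV p (fun ω => (A ω, U ω)) = entRV p (fun ω => (U ω, A ω)) :=
    entRV_congr fun _ _ => by simp only [Prod.mk.injEq]; tauto
  have h2 : entRV p (fun ω => (A ω, Y ω, U ω)) = entRV p (fun ω => (Y ω, U ω, A ω)) :=
    entRV_congr fun _ _ => by simp only [Prod.mk.injEq]; tauto
  have h3 : entRV p (fun ω => (B ω, U ω, A ω)) = entRV p (fun ω => ((A ω, B ω), U ω)) :=
    entRV_congr fun _ _ => by simp only [Prod.mk.injEq]; tauto
  have h4 : entRV p (fun ω => (B ω, Y ω, U ω, A ω)) = entRV p (fun ω => ((A ω, B ω), Y ω, U ω)) :=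
    entRV_congr fun _ _ => by simp only [Prod.mk.injEq]; tauto
  simp only [condMutInfo]
  linarith

theorem condMutInfo_add_condMutInfo_comm {ε : Type*} [Fintype ε]
    (A : Ω → α) (B : Ω → β) (Y : Ω → γ) (U : Ω → ε) :
    condMutInfo p A Y U + condMutInfo p B Y (fun ω => (U ω, A ω))
      = condMutInfo p B Y U + condMutInfo p A Y (fun ω => (U ω, B ω)) := by
  rw [← condMutInfo_pair_eq_add, ← condMutInfo_pair_eq_add]
  exact condMutInfo_congr_left Y U fun _ _ => by simp only [Prod.mk.injEq]; tauto

end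

/-- **Tightened sum-rate bound for Class III (Section 5.4).**
With `I1 = I(V1;Y1|U) − I(V1;Y2|U) + H(W|U,V1)`,
`I2 = I(V2;Y2|U) − I(V2;Y1|U) + H(W|U,V2)`,
`I1* = I(V1;Y1|U,V2) − I(V1;Y2|U,V2) + H(W|U,V1,V2)` and
`I2* = I(V2;Y2|U,V1) − I(V2;Y1|U,V1) + H(W|U,V1,V2)`, one has
`min[I1 + I2*, I2 + I1*] ≤ I1 + I2`; consequently any rate pair with
`R1 ≤ min[I1, I1*]` and `R2 ≤ min[I2, I2*]` satisfies the sum-rate bound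
`R1 + R2 ≤ min[I1 + I2*, I2 + I1*]`, which is at least as tight as
`R1 + R2 ≤ I1 + I2`. -/
theorem classIII_tightened_sumrate {Ω 𝒰 𝒱1 𝒱2 𝒲 𝒴1 𝒴2 : Type}
    [Fintype Ω] [Fintype 𝒰] [Fintype 𝒱1] [Fintype 𝒱2] [Fintype 𝒲]
    [Fintype 𝒴1] [Fintype 𝒴2]
    (p : Ω → ℝ) (hp : IsPMF p)
    (U : Ω → 𝒰) (V1 : Ω → 𝒱1) (V2 : Ω → 𝒱2) (W : Ω → 𝒲)
    (Y1 : Ω → 𝒴1) (Y2 : Ω → 𝒴2) :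
    (min
        ((condMutInfo p V1 Y1 U - condMutInfo p V1 Y2 U
            + condEnt p W (fun ω => (U ω, V1 ω)))
          + (condMutInfo p V2 Y2 (fun ω => (U ω, V1 ω))
            - condMutInfo p V2 Y1 (fun ω => (U ω, V1 ω))
            + condEnt p W (fun ω => (U ω, V1 ω, V2 ω))))
        ((condMutInfo p V2 Y2 U - condMutInfo p V2 Y1 U
            + condEnt p W (fun ω => (U ω, V2 ω)))
          + (condMutInfo p V1 Y1 (fun ω => (U ω, V2 ω))
            - condMutInfo p V1 Y2 (fun ω => (U ω, V2 ω))
            + condEnt p W (fun ω => (U ω, V1 ω, V2 ω))))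
      ≤ (condMutInfo p V1 Y1 U - condMutInfo p V1 Y2 U
          + condEnt p W (fun ω => (U ω, V1 ω)))
        + (condMutInfo p V2 Y2 U - condMutInfo p V2 Y1 U
          + condEnt p W (fun ω => (U ω, V2 ω))))
    ∧ ∀ R1 R2 : ℝ,
      R1 ≤ min
          (condMutInfo p V1 Y1 U - condMutInfo p V1 Y2 U
            + condEnt p W (fun ω => (U ω, V1 ω)))
          (condMutInfo p V1 Y1 (fun ω => (U ω, V2 ω))
            - condMutInfo p V1 Y2 (fun ω => (U ω, V2 ω))
            + condEnt p W (fun ω => (U ω, V1 ω, V2 ω))) →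
      R2 ≤ min
          (condMutInfo p V2 Y2 U - condMutInfo p V2 Y1 U
            + condEnt p W (fun ω => (U ω, V2 ω)))
          (condMutInfo p V2 Y2 (fun ω => (U ω, V1 ω))
            - condMutInfo p V2 Y1 (fun ω => (U ω, V1 ω))
            + condEnt p W (fun ω => (U ω, V1 ω, V2 ω))) →
      R1 + R2 ≤ min
          ((condMutInfo p V1 Y1 U - condMutInfo p V1 Y2 U
              + condEnt p W (fun ω => (U ω, V1 ω)))
            + (condMutInfo p V2 Y2 (fun ω => (U ω, V1 ω))
              - condMutInfo p V2 Y1 (fun ω => (U ω, V1 ω))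
              + condEnt p W (fun ω => (U ω, V1 ω, V2 ω))))
          ((condMutInfo p V2 Y2 U - condMutInfo p V2 Y1 U
              + condEnt p W (fun ω => (U ω, V2 ω)))
            + (condMutInfo p V1 Y1 (fun ω => (U ω, V2 ω))
              - condMutInfo p V1 Y2 (fun ω => (U ω, V2 ω))
              + condEnt p W (fun ω => (U ω, V1 ω, V2 ω)))) := by
  have hY1 := condMutInfo_add_condMutInfo_comm (p := p) V1 V2 Y1 U
  have hY2 := condMutInfo_add_condMutInfo_comm (p := p) V1 V2 Y2 U
  have hW1 : condEnt p W (fun ω => (U ω, V1 ω, V2 ω)) ≤ condEnt p W (fun ω => (U ω, V1 ω)) :=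
    condEnt_le_condEnt_comp hp.1 W (fun ω => (U ω, V1 ω, V2 ω)) fun x => (x.1, x.2.1)
  have hW2 : condEnt p W (fun ω => (U ω, V1 ω, V2 ω)) ≤ condEnt p W (fun ω => (U ω, V2 ω)) :=
    condEnt_le_condEnt_comp hp.1 W (fun ω => (U ω, V1 ω, V2 ω)) fun x => (x.1, x.2.2)
  refine ⟨?_, fun R1 R2 hR1 hR2 => ?_⟩
  · rw [min_le_iff]
    by_contra! h
    linarith [h.1, h.2]
  · rw [le_min_iff] at hR1 hR2
    exact le_min (by linarith) (by linarith)
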